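/- arXiv:1412.0483 — 2 statements merged into one kernel-verified Lean document; each statement's English description precedes it below -/
import Mathlib

section
/- Let 1 < p < ∞, a ∈ ℤ, P ∈ D a dyadic cube in ℝⁿ, and let (w,σ) be a pair of weights with 0 < ⨍_P σ < ∞ and 2^a < (⨍_P w)(⨍_P σ)^{p−1} ≤ 2^{a+1}. Let S ⊆ D be a sparse family all of whose cubes are contained in P and such that every Q ∈ S satisfies ⨍_Q σ ≤ 2·⨍_P σ and 2^a < (⨍_Q w)(⨍_Q σ)^{p−1} ≤ 2^{a+1}. Then there exist constants c > 0 and C, depending only on n and p (in particular independent of a, P, S, w, σ), such that for all t > 0: w({x ∈ P : T^S σ(x) > t·⨍_P σ}) ≤ C·e^{−ct}·w(P). -/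
/-!
Put `V = ⨍_P σ` and sort the cubes of `S` into bands: band `j` holds the cubes with
`⨍_Q σ ≈ 2^{-j} V`. Since the joint `A_p` products of `Q` and `P` agree up to a factor `2`,
`⨍_Q w ≲ 2^{j(p-1)} ⨍_P w` on band `j`. If `T^S σ(x) > tV`, then for some `j` the point `x`
lies in more than `L_j ≈ t (3/2)^j` cubes of band `j`, hence in a cube of generation `L_j` of
that band. Sparseness halves the Lebesgue measure of each successive generation, so this set has
`w`-measure `≲ 2^{j(p-1) - L_j} w(P)`, and summing over `j` gives `≲ 2^{-t/32} w(P)`.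
-/

noncomputable section
open MeasureTheory ENNReal Set Metric

/-- `ℝⁿ` as a Euclidean space. -/
abbrev En (n : ℕ) := EuclideanSpace ℝ (Fin n)

/-- `w(A) = ∫_A w`, for a nonnegative function `w` (as an extended nonnegative real). -/
def wInt {n : ℕ} (w : En n → ℝ) (A : Set (En n)) : ℝ≥0∞ :=
  ∫⁻ y in A, ENNReal.ofReal (w y)

/-- The average `⨍_A w = (1/|A|) ∫_A w` (as an extended nonnegative real). -/
def avgSet {n : ℕ} (w : En n → ℝ) (A : Set (En n)) : ℝ≥0∞ :=
  (volume A)⁻¹ * wInt w A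

/-- The uncentered Hardy–Littlewood maximal operator `Mf(x) = sup_{B ∋ x} ⨍_B |f|`. -/
def maxOpE {n : ℕ} (f : En n → ℝ) (x : En n) : ℝ≥0∞ :=
  ⨆ (c : En n) (r : ℝ) (_ : 0 < r) (_ : x ∈ ball c r),
    avgSet (fun y => |f y|) (ball c r)

/-- The weak `A∞` characteristic `[w]_{A∞^weak} = sup_B (1/w(2B)) ∫_B M(1_B w)`. -/
def weakAinfE {n : ℕ} (w : En n → ℝ) : ℝ≥0∞ :=
  ⨆ (c : En n) (r : ℝ) (_ : 0 < r),
    (wInt w (ball c (2 * r)))⁻¹ *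
      ∫⁻ y in ball c r, maxOpE ((ball c r).indicator w) y

/-- The joint `A_p` characteristic `[w,σ]_{A_p} = sup_B (⨍_B w)(⨍_B σ)^{p-1}`. -/
def apCharE {n : ℕ} (p : ℝ) (w σ : En n → ℝ) : ℝ≥0∞ :=
  ⨆ (c : En n) (r : ℝ) (_ : 0 < r),
    avgSet w (ball c r) * avgSet σ (ball c r) ^ (p - 1)

/-- The weighted `L^p` norm `(∫ |g|^p w)^{1/p}` (as an extended nonnegative real). -/
def wLp {n : ℕ} (p : ℝ) (w : En n → ℝ) (g : En n → ℝ) : ℝ≥0∞ :=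
  (∫⁻ x, ENNReal.ofReal |g x| ^ p * ENNReal.ofReal (w x)) ^ (1 / p)

/-- A weight on `ℝⁿ`: a nonnegative, measurable, locally integrable function. -/
def IsWeightE {n : ℕ} (w : En n → ℝ) : Prop :=
  (∀ x, 0 ≤ w x) ∧ Measurable w ∧ LocallyIntegrable w volume

/-- The standard dyadic cube `2^{-k}([0,1)ⁿ + m)`. -/
def dyadicCube (n : ℕ) (k : ℤ) (m : Fin n → ℤ) : Set (En n) :=
  {x | ∀ i, (m i : ℝ) * (2 : ℝ) ^ (-k) ≤ x i ∧ x i < ((m i : ℝ) + 1) * (2 : ℝ) ^ (-k)}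

/-- The standard dyadic grid `𝒟` in `ℝⁿ`. -/
def stdDyadic (n : ℕ) : Set (Set (En n)) := {Q | ∃ k m, Q = dyadicCube n k m}

/-- A sparse family `S ⊆ 𝒟`: for every `Q ∈ S`,
`|Q ∖ ⋃ {Q' ∈ S : Q' ⊊ Q}| ≥ |Q|/2`. -/
def IsSparseFam {n : ℕ} (S : Set (Set (En n))) : Prop :=
  S ⊆ stdDyadic n ∧
    ∀ Q ∈ S, volume Q ≤ 2 * volume (Q \ ⋃₀ {Q' | Q' ∈ S ∧ Q' ⊂ Q})

/-- The sparse operator `T^S g = ∑_{Q ∈ S} (⨍_Q g) 1_Q` (real-valued version). -/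
def sparseOp {n : ℕ} (S : Set (Set (En n))) (g : En n → ℝ) (x : En n) : ℝ :=
  ∑' Q : S, Set.indicator (Q : Set (En n)) (fun _ => ⨍ y in (Q : Set (En n)), g y) x

/-- The sparse operator applied to a nonnegative function (`ℝ≥0∞`-valued version). -/
def sparseOpNN {n : ℕ} (S : Set (Set (En n))) (w : En n → ℝ) (x : En n) : ℝ≥0∞ :=
  ∑' Q : S, Set.indicator (Q : Set (En n)) (fun _ => avgSet w (Q : Set (En n))) x

lemma mem_dyadicCube_iff {n : ℕ} {k : ℤ} {m : Fin n → ℤ} {x : En n} :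
    x ∈ dyadicCube n k m ↔ ∀ i, ⌊x i * 2 ^ k⌋ = m i := by
  have h : (0 : ℝ) < 2 ^ k := zpow_pos two_pos k
  simp only [dyadicCube, mem_ofPred_eq, Int.floor_eq_iff, zpow_neg, ← div_eq_mul_inv,
    div_le_iff₀ h, lt_div_iff₀ h]

lemma floor_mul_two_zpow_of_le {k k' : ℤ} (hk : k ≤ k') (r : ℝ) :
    ⌊r * 2 ^ k⌋ = ⌊r * 2 ^ k'⌋ / 2 ^ (k' - k).toNat := by
  have h : r * 2 ^ k = r * 2 ^ k' / ((2 ^ (k' - k).toNat : ℕ) : ℝ) := by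
    rw [Nat.cast_pow, Nat.cast_ofNat, ← zpow_natCast, Int.toNat_of_nonneg (by omega),
      mul_div_assoc, ← zpow_sub₀ two_ne_zero]
    congr 2
    omega
  rw [h, Int.floor_div_natCast]
  push_cast
  rfl

lemma dyadicCube_subset_of_le {n : ℕ} {k k' : ℤ} {m m' : Fin n → ℤ} (hk : k ≤ k') {x : En n}
    (hx : x ∈ dyadicCube n k m) (hx' : x ∈ dyadicCube n k' m') :
    dyadicCube n k' m' ⊆ dyadicCube n k m := by
  intro y hy
  rw [mem_dyadicCube_iff] at hx hx' hy ⊢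
  intro i
  rw [← hx i, floor_mul_two_zpow_of_le hk, floor_mul_two_zpow_of_le hk, hy i, hx' i]

lemma subset_or_subset_of_mem_stdDyadic {n : ℕ} {Q Q' : Set (En n)} (hQ : Q ∈ stdDyadic n)
    (hQ' : Q' ∈ stdDyadic n) {x : En n} (hx : x ∈ Q) (hx' : x ∈ Q') : Q ⊆ Q' ∨ Q' ⊆ Q := by
  obtain ⟨k, m, rfl⟩ := hQ
  obtain ⟨k', m', rfl⟩ := hQ'
  rcases le_total k k' with h | h
  · exact Or.inr (dyadicCube_subset_of_le h hx hx')
  · exact Or.inl (dyadicCube_subset_of_le h hx' hx)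

lemma countable_stdDyadic (n : ℕ) : (stdDyadic n).Countable :=
  (countable_range fun km : ℤ × (Fin n → ℤ) => dyadicCube n km.1 km.2).mono
    fun _ ⟨k, m, hQ⟩ => mem_range.2 ⟨(k, m), hQ.symm⟩

lemma dyadicCube_eq_preimage (n : ℕ) (k : ℤ) (m : Fin n → ℤ) :
    dyadicCube n k m = (MeasurableEquiv.toLp 2 (Fin n → ℝ)).symm ⁻¹'
      univ.pi fun i => Ico ((m i : ℝ) * 2 ^ (-k)) ((m i + 1) * 2 ^ (-k)) := by
  ext x
  simp [dyadicCube, mem_pi]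

lemma volume_dyadicCube (n : ℕ) (k : ℤ) (m : Fin n → ℤ) :
    volume (dyadicCube n k m) = ENNReal.ofReal (2 ^ (-k)) ^ n := by
  rw [dyadicCube_eq_preimage, (EuclideanSpace.volume_preserving_symm_measurableEquiv_toLp
    (Fin n)).measure_preimage (MeasurableSet.univ_pi fun _ => measurableSet_Ico).nullMeasurableSet,
    volume_pi_pi]
  simp [Real.volume_Ico, add_mul]

lemma measurableSet_of_mem_stdDyadic {n : ℕ} {Q : Set (En n)} (hQ : Q ∈ stdDyadic n) :
    MeasurableSet Q := by
  obtain ⟨k, m, rfl⟩ := hQ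
  rw [dyadicCube_eq_preimage]
  exact (MeasurableEquiv.measurable _) (MeasurableSet.univ_pi fun _ => measurableSet_Ico)

lemma volume_pos_of_mem_stdDyadic {n : ℕ} {Q : Set (En n)} (hQ : Q ∈ stdDyadic n) :
    0 < volume Q := by
  obtain ⟨k, m, rfl⟩ := hQ
  rw [volume_dyadicCube]
  positivity

lemma volume_ne_top_of_mem_stdDyadic {n : ℕ} {Q : Set (En n)} (hQ : Q ∈ stdDyadic n) :
    volume Q ≠ ∞ := by
  obtain ⟨k, m, rfl⟩ := hQ
  rw [volume_dyadicCube]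
  exact pow_ne_top ofReal_ne_top

lemma wInt_eq_volume_mul_avgSet {n : ℕ} (w : En n → ℝ) {Q : Set (En n)} (h0 : volume Q ≠ 0)
    (htop : volume Q ≠ ∞) : wInt w Q = volume Q * avgSet w Q := by
  rw [avgSet, ← mul_assoc, ENNReal.mul_inv_cancel h0 htop, one_mul]

lemma wInt_sUnion_le {n : ℕ} (w : En n → ℝ) {C : Set (Set (En n))} (hC : C.Countable) :
    wInt w (⋃₀ C) ≤ ∑' Q : C, wInt w Q := by
  have := hC.to_subtype
  rw [sUnion_eq_iUnion]
  exact lintegral_iUnion_le _ _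

lemma IsChain.exists_forall_le_of_finite {α : Type*} [PartialOrder α] {C : Set α}
    (hC : IsChain (· ≤ ·) C) (hfin : C.Finite) (hne : C.Nonempty) :
    ∃ a ∈ C, ∀ b ∈ C, a ≤ b := by
  obtain ⟨a, ha⟩ := hfin.exists_minimal hne
  refine ⟨a, ha.prop, fun b hb => ?_⟩
  rcases eq_or_ne a b with rfl | hne
  · exact le_rfl
  · exact (hC ha.prop hb hne).resolve_right fun h => hne (ha.eq_of_le hb h).symm

/-- `Q \ strictUnion S Q` is the set `E(Q)` of the sparseness condition. -/
def strictUnion {n : ℕ} (S : Set (Set (En n))) (Q : Set (En n)) : Set (En n) :=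
  ⋃₀ {Q' | Q' ∈ S ∧ Q' ⊂ Q}

lemma strictUnion_subset {n : ℕ} (S : Set (Set (En n))) (Q : Set (En n)) :
    strictUnion S Q ⊆ Q :=
  sUnion_subset fun _ h => h.2.1

lemma subset_strictUnion {n : ℕ} {S : Set (Set (En n))} {Q Q' : Set (En n)} (hQ : Q ∈ S)
    (hQQ' : Q ⊂ Q') : Q ⊆ strictUnion S Q' :=
  subset_sUnion_of_mem ⟨hQ, hQQ'⟩

lemma disjoint_sdiff_strictUnion {n : ℕ} {S : Set (Set (En n))} {Q Q' : Set (En n)} (hQ : Q ∈ S)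
    (hQQ' : Q ⊂ Q') : Disjoint (Q \ strictUnion S Q) (Q' \ strictUnion S Q') :=
  (disjoint_sdiff_right.mono_left (subset_strictUnion hQ hQQ')).mono_left sdiff_subset

/-- Junk value `0` when there are infinitely many supercubes; this cannot happen once the cubes
of a sparse family lie in a set of finite measure (`IsSparseFam.finite_setOf_subset`). -/
def depth {n : ℕ} (S : Set (Set (En n))) (Q : Set (En n)) : ℕ :=
  {Q' | Q' ∈ S ∧ Q ⊂ Q'}.ncard

def generation {n : ℕ} (S : Set (Set (En n))) (g : ℕ) : Set (Set (En n)) :=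
  {Q | Q ∈ S ∧ depth S Q = g}

namespace IsSparseFam

variable {n : ℕ} {S : Set (Set (En n))} {P : Set (En n)}

lemma mono (hS : IsSparseFam S) {T : Set (Set (En n))} (hTS : T ⊆ S) : IsSparseFam T := by
  refine ⟨hTS.trans hS.1, fun Q hQ => (hS.2 Q (hTS hQ)).trans ?_⟩
  gcongr

lemma countable (hS : IsSparseFam S) : S.Countable :=
  (countable_stdDyadic n).mono hS.1

lemma isChain_setOf_mem (hS : IsSparseFam S) (x : En n) :
    IsChain (· ⊆ ·) {Q | Q ∈ S ∧ x ∈ Q} := fun _ hQ _ hQ' _ =>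
  subset_or_subset_of_mem_stdDyadic (hS.1 hQ.1) (hS.1 hQ'.1) hQ.2 hQ'.2

lemma isChain_setOf_subset (hS : IsSparseFam S) {R : Set (En n)} (hR : R ∈ S) :
    IsChain (· ⊆ ·) {Q | Q ∈ S ∧ R ⊆ Q} := by
  obtain ⟨x, hx⟩ := nonempty_of_measure_ne_zero (volume_pos_of_mem_stdDyadic (hS.1 hR)).ne'
  refine (hS.isChain_setOf_mem x).mono ?_
  exact fun _ hQ => ⟨hQ.1, hQ.2 hx⟩

lemma measurableSet_strictUnion (hS : IsSparseFam S) (Q : Set (En n)) :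
    MeasurableSet (strictUnion S Q) :=
  .sUnion (hS.countable.mono fun _ h => h.1) fun _ h => measurableSet_of_mem_stdDyadic (hS.1 h.1)

lemma volume_strictUnion_le (hS : IsSparseFam S) {Q : Set (En n)} (hQ : Q ∈ S) :
    volume (strictUnion S Q) ≤ 2⁻¹ * volume Q := by
  have hsplit := measure_sdiff_add_inter (μ := volume) Q (hS.measurableSet_strictUnion Q)
  rw [inter_eq_right.2 (strictUnion_subset S Q)] at hsplit
  have h : 2 * volume (strictUnion S Q) + volume Q ≤ volume Q + volume Q := by
    calc 2 * volume (strictUnion S Q) + volume Q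
        ≤ 2 * volume (strictUnion S Q) + 2 * volume (Q \ strictUnion S Q) := by
          gcongr; exact hS.2 Q hQ
      _ = volume Q + volume Q := by rw [← mul_add, add_comm, hsplit, two_mul]
  rw [ENNReal.add_le_add_iff_right (volume_ne_top_of_mem_stdDyadic (hS.1 hQ))] at h
  rwa [← ENNReal.div_eq_inv_mul, ENNReal.le_div_iff_mul_le (Or.inl two_ne_zero)
    (Or.inl ofNat_ne_top), mul_comm]

lemma finite_setOf_subset (hS : IsSparseFam S) (hP : volume P ≠ ∞) (hSP : ∀ Q ∈ S, Q ⊆ P)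
    {R : Set (En n)} (hR : R ∈ S) : {Q | Q ∈ S ∧ R ⊆ Q}.Finite := by
  -- the sets `E(Q)` of the supercubes `Q` are disjoint, lie in `P` and have measure `≥ |R|/2`
  set A := {Q | Q ∈ S ∧ R ⊆ Q}
  have hdisj : Pairwise fun Q Q' : A =>
      Disjoint ((Q : Set (En n)) \ strictUnion S Q) ((Q' : Set (En n)) \ strictUnion S Q') := by
    intro Q Q' hne
    have hne' : (Q : Set (En n)) ≠ Q' := Subtype.coe_ne_coe.2 hne
    rcases hS.isChain_setOf_subset hR Q.2 Q'.2 hne' with h | h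
    · exact disjoint_sdiff_strictUnion Q.2.1 (h.ssubset_of_ne hne')
    · exact (disjoint_sdiff_strictUnion Q'.2.1 (h.ssubset_of_ne hne'.symm)).symm
  have hfin := Measure.finite_const_le_meas_of_disjoint_iUnion volume
    (ENNReal.half_pos (volume_pos_of_mem_stdDyadic (hS.1 hR)).ne')
    (fun Q : A => (measurableSet_of_mem_stdDyadic (hS.1 Q.2.1)).diff
      (hS.measurableSet_strictUnion Q)) hdisj
    (ne_top_of_le_ne_top hP (measure_mono (iUnion_subset fun Q => sdiff_subset.trans
      (hSP _ Q.2.1))))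
  have huniv : {Q : A | volume R / 2 ≤ volume ((Q : Set (En n)) \ strictUnion S Q)} = univ :=
    eq_univ_of_forall fun Q => ENNReal.div_le_of_le_mul
      ((measure_mono Q.2.2).trans ((hS.2 Q Q.2.1).trans_eq (mul_comm _ _)))
  rw [huniv] at hfin
  exact finite_coe_iff.1 (finite_univ_iff.1 hfin)

lemma finite_setOf_ssubset (hS : IsSparseFam S) (hP : volume P ≠ ∞) (hSP : ∀ Q ∈ S, Q ⊆ P)
    {R : Set (En n)} (hR : R ∈ S) : {Q | Q ∈ S ∧ R ⊂ Q}.Finite :=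
  (hS.finite_setOf_subset hP hSP hR).subset fun _ h => ⟨h.1, h.2.1⟩

lemma depth_lt_depth_of_ssubset (hS : IsSparseFam S) (hP : volume P ≠ ∞)
    (hSP : ∀ Q ∈ S, Q ⊆ P) {Q Q' : Set (En n)} (hQ : Q ∈ S) (hQ' : Q' ∈ S) (hQQ' : Q ⊂ Q') :
    depth S Q' < depth S Q :=
  ncard_lt_ncard ⟨fun _ h => ⟨h.1, hQQ'.trans h.2⟩, fun h => (h ⟨hQ', hQQ'⟩).2.ne rfl⟩
    (hS.finite_setOf_ssubset hP hSP hQ)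

lemma pairwise_disjoint_generation (hS : IsSparseFam S) (hP : volume P ≠ ∞)
    (hSP : ∀ Q ∈ S, Q ⊆ P) (g : ℕ) : (generation S g).Pairwise Disjoint := by
  rintro Q ⟨hQ, rfl⟩ Q' ⟨hQ', hQ'g⟩ hne
  rw [disjoint_iff_forall_ne]
  rintro x hx _ hx' rfl
  rcases subset_or_subset_of_mem_stdDyadic (hS.1 hQ) (hS.1 hQ') hx hx' with h | h
  · exact (hS.depth_lt_depth_of_ssubset hP hSP hQ hQ' (h.ssubset_of_ne hne)).ne hQ'g
  · exact (hS.depth_lt_depth_of_ssubset hP hSP hQ' hQ (h.ssubset_of_ne hne.symm)).ne' hQ'g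

lemma exists_parent (hS : IsSparseFam S) (hP : volume P ≠ ∞) (hSP : ∀ Q ∈ S, Q ⊆ P)
    {g : ℕ} {Q : Set (En n)} (hQ : Q ∈ generation S (g + 1)) :
    ∃ Q' ∈ generation S g, Q ⊂ Q' := by
  set A := {Q' | Q' ∈ S ∧ Q ⊂ Q'}
  have hA : A.ncard = g + 1 := hQ.2
  have hfin : A.Finite := hS.finite_setOf_ssubset hP hSP hQ.1
  have hne : A.Nonempty := nonempty_of_ncard_ne_zero (by omega)
  have hchain : IsChain (· ⊆ ·) A := by
    refine (hS.isChain_setOf_subset hQ.1).mono ?_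
    exact fun _ h => ⟨h.1, h.2.1⟩
  obtain ⟨Q', hQ', hleast⟩ := hchain.exists_forall_le_of_finite hfin hne
  have hsupers : {Q'' | Q'' ∈ S ∧ Q' ⊂ Q''} = A \ {Q'} := by
    ext Q''
    refine ⟨fun h => ⟨⟨h.1, hQ'.2.trans h.2⟩, h.2.ne'⟩, fun h => ⟨h.1.1, ?_⟩⟩
    exact (hleast Q'' h.1).ssubset_of_ne (Ne.symm h.2)
  refine ⟨Q', ⟨hQ'.1, ?_⟩, hQ'.2⟩
  have := ncard_sdiff_singleton_add_one hQ' hfin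
  rw [depth, hsupers]
  omega

lemma exists_superset_mem_generation (hS : IsSparseFam S) (hP : volume P ≠ ∞)
    (hSP : ∀ Q ∈ S, Q ⊆ P) {g : ℕ} {Q : Set (En n)} (hQ : Q ∈ S) (hg : g ≤ depth S Q) :
    ∃ Q' ∈ generation S g, Q ⊆ Q' := by
  obtain ⟨d, hd⟩ : ∃ d, depth S Q = g + d := ⟨_, (Nat.add_sub_cancel' hg).symm⟩
  clear hg
  induction d generalizing Q with
  | zero => exact ⟨Q, ⟨hQ, hd⟩, subset_rfl⟩
  | succ d ih =>
    obtain ⟨Q₁, hQ₁, hQQ₁⟩ := hS.exists_parent hP hSP (g := g + d) ⟨hQ, by omega⟩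
    obtain ⟨Q', hQ', hQ₁Q'⟩ := ih hQ₁.1 hQ₁.2
    exact ⟨Q', hQ', hQQ₁.subset.trans hQ₁Q'⟩

lemma mem_sUnion_generation_of_le_encard (hS : IsSparseFam S) (hP : volume P ≠ ∞)
    (hSP : ∀ Q ∈ S, Q ⊆ P) {g : ℕ} {x : En n}
    (hx : ((g + 1 : ℕ) : ℕ∞) ≤ {Q | Q ∈ S ∧ x ∈ Q}.encard) : x ∈ ⋃₀ generation S g := by
  obtain ⟨t, hts, ht⟩ := exists_subset_encard_eq hx
  have htne : t.Nonempty := nonempty_of_encard_ne_zero (by rw [ht]; simp)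
  obtain ⟨Q₀, hQ₀, hleast⟩ := ((hS.isChain_setOf_mem x).mono hts).exists_forall_le_of_finite
    (finite_of_encard_eq_coe ht) htne
  have hsub : t \ {Q₀} ⊆ {Q | Q ∈ S ∧ Q₀ ⊂ Q} := fun Q hQ =>
    ⟨(hts hQ.1).1, (hleast Q hQ.1).ssubset_of_ne (Ne.symm hQ.2)⟩
  have hcard : (t \ {Q₀}).encard = g := by
    have := encard_sdiff_singleton_add_one hQ₀
    rw [ht, Nat.cast_add, Nat.cast_one] at this
    exact ENat.add_left_injective_of_ne_top ENat.one_ne_top this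
  have hdepth : g ≤ depth S Q₀ := by
    have := encard_le_encard hsub
    rwa [hcard, ← (hS.finite_setOf_ssubset hP hSP (hts hQ₀).1).cast_ncard_eq,
      Nat.cast_le] at this
  obtain ⟨Q', hQ', hQ₀Q'⟩ := hS.exists_superset_mem_generation hP hSP (hts hQ₀).1 hdepth
  exact ⟨Q', hQ', hQ₀Q' (hts hQ₀).2⟩

lemma volume_sUnion_generation_le (hS : IsSparseFam S) (hP : volume P ≠ ∞)
    (hSP : ∀ Q ∈ S, Q ⊆ P) (g : ℕ) : volume (⋃₀ generation S g) ≤ 2⁻¹ ^ g * volume P := by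
  induction g with
  | zero => simpa using measure_mono (sUnion_subset fun Q hQ => hSP Q hQ.1)
  | succ g ih =>
    have hcount : (generation S g).Countable := hS.countable.mono fun _ h => h.1
    calc volume (⋃₀ generation S (g + 1))
        ≤ volume (⋃ Q ∈ generation S g, strictUnion S Q) := by
          refine measure_mono fun x ⟨Q, hQ, hx⟩ => ?_
          obtain ⟨Q', hQ', hQQ'⟩ := hS.exists_parent hP hSP hQ
          exact mem_biUnion hQ' (subset_strictUnion hQ.1 hQQ' hx)
      _ ≤ ∑' Q : generation S g, volume (strictUnion S Q) := measure_biUnion_le _ hcount _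
      _ ≤ ∑' Q : generation S g, 2⁻¹ * volume (Q : Set (En n)) :=
          ENNReal.tsum_le_tsum fun Q => hS.volume_strictUnion_le Q.2.1
      _ = 2⁻¹ * volume (⋃₀ generation S g) := by
          rw [ENNReal.tsum_mul_left, measure_sUnion hcount
            (hS.pairwise_disjoint_generation hP hSP g)
            fun Q hQ => measurableSet_of_mem_stdDyadic (hS.1 hQ.1)]
      _ ≤ 2⁻¹ ^ (g + 1) * volume P := by
          rw [pow_succ', mul_assoc]
          gcongr

lemma wInt_sUnion_generation_le (hS : IsSparseFam S) (hP : volume P ≠ ∞)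
    (hSP : ∀ Q ∈ S, Q ⊆ P) {w : En n → ℝ} {K : ℝ≥0∞} (hK : ∀ Q ∈ S, avgSet w Q ≤ K) (g : ℕ) :
    wInt w (⋃₀ generation S g) ≤ K * (2⁻¹ ^ g * volume P) := by
  have hcount : (generation S g).Countable := hS.countable.mono fun _ h => h.1
  calc wInt w (⋃₀ generation S g)
      ≤ ∑' Q : generation S g, wInt w Q := wInt_sUnion_le w hcount
    _ ≤ ∑' Q : generation S g, K * volume (Q : Set (En n)) := by
        refine ENNReal.tsum_le_tsum fun Q => ?_
        have hQ := hS.1 Q.2.1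
        rw [wInt_eq_volume_mul_avgSet w (volume_pos_of_mem_stdDyadic hQ).ne'
          (volume_ne_top_of_mem_stdDyadic hQ), mul_comm]
        gcongr
        exact hK Q Q.2.1
    _ = K * volume (⋃₀ generation S g) := by
        rw [ENNReal.tsum_mul_left, measure_sUnion hcount
          (hS.pairwise_disjoint_generation hP hSP g)
          fun Q hQ => measurableSet_of_mem_stdDyadic (hS.1 hQ.1)]
    _ ≤ K * (2⁻¹ ^ g * volume P) := by
        gcongr
        exact hS.volume_sUnion_generation_le hP hSP g

end IsSparseFam

def band {n : ℕ} (S : Set (Set (En n))) (σ : En n → ℝ) (V : ℝ≥0∞) (j : ℕ) :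
    Set (Set (En n)) :=
  {Q | Q ∈ S ∧ V ≤ avgSet σ Q * 2 ^ j ∧ avgSet σ Q * 2 ^ j ≤ 2 * V}

lemma exists_le_mul_two_pow_le {A V : ℝ≥0∞} (hA : A ≠ 0) (hV : V ≠ ∞) (hAV : A ≤ 2 * V) :
    ∃ j : ℕ, V ≤ A * 2 ^ j ∧ A * 2 ^ j ≤ 2 * V := by
  classical
  have hex : ∃ j : ℕ, V ≤ A * 2 ^ j := by
    obtain ⟨N, hN⟩ := ENNReal.exists_nat_mul_gt hA hV
    refine ⟨N, hN.le.trans ?_⟩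
    rw [mul_comm]
    gcongr
    exact_mod_cast Nat.lt_two_pow_self.le
  refine ⟨Nat.find hex, Nat.find_spec hex, ?_⟩
  rcases h : Nat.find hex with _ | i
  · simpa using hAV
  · have hi : A * 2 ^ i < V := not_le.1 (Nat.find_min hex (by omega))
    calc A * 2 ^ (i + 1) = 2 * (A * 2 ^ i) := by ring
      _ ≤ 2 * V := by gcongr

lemma le_mul_rpow_of_mul_rpow_le {u c A V s : ℝ≥0∞} {r : ℝ} (hr : 0 ≤ r) (hV0 : V ≠ 0)
    (hV : V ≠ ∞) (h : u * A ^ r ≤ c * V ^ r) (hVA : V ≤ A * s) : u ≤ c * s ^ r := by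
  refine (ENNReal.mul_le_mul_iff_left (ENNReal.rpow_pos (pos_iff_ne_zero.2 hV0) hV).ne'
    (ENNReal.rpow_ne_top_of_nonneg hr hV)).1 ?_
  calc u * V ^ r ≤ u * (A * s) ^ r := by gcongr
    _ = u * A ^ r * s ^ r := by rw [ENNReal.mul_rpow_of_nonneg _ _ hr, mul_assoc]
    _ ≤ c * V ^ r * s ^ r := by gcongr
    _ = c * s ^ r * V ^ r := by ring

lemma sparseOpNN_le_tsum_encard_mul {n : ℕ} {S : Set (Set (En n))} {σ : En n → ℝ} (x : En n)
    (B : ℕ → Set (Set (En n))) (c : ℕ → ℝ≥0∞) (hB : ∀ Q ∈ S, ∃ j, Q ∈ B j)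
    (hc : ∀ j, ∀ Q ∈ B j, avgSet σ Q ≤ c j) :
    sparseOpNN S σ x ≤ ∑' j, {Q | Q ∈ B j ∧ x ∈ Q}.encard * c j := by
  calc sparseOpNN S σ x
      ≤ ∑' (Q : S) (j : ℕ), {Q | Q ∈ B j ∧ x ∈ Q}.indicator (fun _ => c j) (Q : Set (En n)) := by
        refine ENNReal.tsum_le_tsum fun Q => ?_
        by_cases hx : x ∈ (Q : Set (En n))
        · obtain ⟨j, hj⟩ := hB Q Q.2
          rw [indicator_of_mem hx]
          refine le_trans ?_ (ENNReal.le_tsum j)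
          rw [indicator_of_mem (show (Q : Set (En n)) ∈ {Q | Q ∈ B j ∧ x ∈ Q} from ⟨hj, hx⟩)]
          exact hc j Q hj
        · simp [indicator_of_notMem hx]
    _ = ∑' (j : ℕ) (Q : S), {Q | Q ∈ B j ∧ x ∈ Q}.indicator (fun _ => c j) (Q : Set (En n)) :=
        ENNReal.tsum_comm
    _ ≤ ∑' (j : ℕ) (Q : Set (En n)), {Q | Q ∈ B j ∧ x ∈ Q}.indicator (fun _ => c j) Q :=
        ENNReal.tsum_le_tsum fun j =>
          ENNReal.tsum_comp_le_tsum_of_injective Subtype.val_injective _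
    _ = ∑' j, {Q | Q ∈ B j ∧ x ∈ Q}.encard * c j := by
        simp_rw [← tsum_subtype, ENNReal.tsum_set_const]

/-- Chosen so that `∑ⱼ bandDepth t j · 2^{1-j} ≤ t`, while still growing fast enough in `j` to
beat the factor `2^{j(p-1)}` by which `w`-averages on band `j` may exceed `⨍_P w`. -/
def bandDepth (t : ℝ) (j : ℕ) : ℕ := ⌊t * (3 / 2) ^ j / 16⌋₊

lemma tsum_bandDepth_mul_le {t : ℝ} (ht : 0 ≤ t) :
    ∑' j, (bandDepth t j : ℝ≥0∞) * (2 * 2⁻¹ ^ j) ≤ ENNReal.ofReal t := by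
  have hterm (j : ℕ) :
      (bandDepth t j : ℝ≥0∞) * (2 * 2⁻¹ ^ j) ≤ ENNReal.ofReal (t / 8 * (3 / 4) ^ j) := by
    have h : (bandDepth t j : ℝ≥0∞) * (2 * 2⁻¹ ^ j) =
        ENNReal.ofReal (bandDepth t j * (2 * (1 / 2) ^ j)) := by
      rw [ENNReal.ofReal_mul (by positivity), ENNReal.ofReal_natCast,
        ENNReal.ofReal_mul (by norm_num), ENNReal.ofReal_pow (by norm_num), one_div,
        ENNReal.ofReal_inv_of_pos two_pos, ENNReal.ofReal_ofNat]
    rw [h]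
    refine ENNReal.ofReal_le_ofReal ?_
    calc (bandDepth t j : ℝ) * (2 * (1 / 2) ^ j) ≤ t * (3 / 2) ^ j / 16 * (2 * (1 / 2) ^ j) := by
          gcongr
          exact Nat.floor_le (by positivity)
      _ = t / 8 * ((3 / 2) * (1 / 2)) ^ j := by rw [mul_pow]; ring
      _ = t / 8 * (3 / 4) ^ j := by norm_num
  calc ∑' j, (bandDepth t j : ℝ≥0∞) * (2 * 2⁻¹ ^ j)
      ≤ ∑' j, ENNReal.ofReal (t / 8 * (3 / 4) ^ j) := ENNReal.tsum_le_tsum hterm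
    _ = ENNReal.ofReal (t / 2) := by
        rw [← ENNReal.ofReal_tsum_of_nonneg (fun j => by positivity)
          ((summable_geometric_of_lt_one (by norm_num) (by norm_num)).mul_left _),
          tsum_mul_left, tsum_geometric_of_lt_one (by norm_num) (by norm_num)]
        norm_num
        ring_nf
    _ ≤ ENNReal.ofReal t := ENNReal.ofReal_le_ofReal (by linarith)

lemma tsum_mul_inv_two_pow_bandDepth_le {p t : ℝ} (hp : 0 ≤ p) (ht : 32 * (p + 2) ≤ t) :
    ∑' j : ℕ, 2 * ((2 : ℝ≥0∞) ^ j) ^ (p - 1) * 2⁻¹ ^ bandDepth t j ≤ 2 ^ (1 - t / 32) := by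
  have hterm (j : ℕ) : 2 * ((2 : ℝ≥0∞) ^ j) ^ (p - 1) * 2⁻¹ ^ bandDepth t j ≤
      2 ^ (-t / 32) * 2⁻¹ ^ j := by
    have hpow (x : ℕ) : (2⁻¹ : ℝ≥0∞) ^ x = 2 ^ (-(x : ℝ)) := by
      rw [← ENNReal.inv_pow, ← ENNReal.rpow_natCast, ← ENNReal.rpow_neg]
    have hexp : 1 + j * (p - 1) + -(bandDepth t j : ℝ) ≤ -t / 32 + -j := by
      have hfloor := Nat.lt_floor_add_one (t * (3 / 2) ^ j / 16)
      have hbern : t * (1 + j * (1 / 2)) ≤ t * (3 / 2) ^ j := by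
        gcongr
        · linarith
        · exact (one_add_mul_le_pow (by norm_num) j).trans_eq (by norm_num)
      rw [bandDepth] at *
      nlinarith [mul_nonneg (by linarith : 0 ≤ t / 32 - p) (Nat.cast_nonneg j : (0 : ℝ) ≤ j)]
    calc 2 * ((2 : ℝ≥0∞) ^ j) ^ (p - 1) * 2⁻¹ ^ bandDepth t j
        = 2 ^ (1 + j * (p - 1) + -(bandDepth t j : ℝ)) := by
          rw [hpow, ← ENNReal.rpow_natCast, ← ENNReal.rpow_mul,
            ENNReal.rpow_add _ _ two_ne_zero ofNat_ne_top,
            ENNReal.rpow_add _ _ two_ne_zero ofNat_ne_top, ENNReal.rpow_one]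
      _ ≤ 2 ^ (-t / 32 + -j) := ENNReal.rpow_le_rpow_of_exponent_le one_le_two hexp
      _ = 2 ^ (-t / 32) * 2⁻¹ ^ j := by
          rw [hpow, ENNReal.rpow_add _ _ two_ne_zero ofNat_ne_top]
  calc ∑' j : ℕ, 2 * ((2 : ℝ≥0∞) ^ j) ^ (p - 1) * 2⁻¹ ^ bandDepth t j
      ≤ ∑' j : ℕ, 2 ^ (-t / 32) * 2⁻¹ ^ j := ENNReal.tsum_le_tsum hterm
    _ = 2 ^ (1 - t / 32) := by
        rw [ENNReal.tsum_mul_left, ENNReal.tsum_geometric, ENNReal.one_sub_inv_two, inv_inv,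
          sub_eq_neg_add, ENNReal.rpow_add _ _ two_ne_zero ofNat_ne_top, ENNReal.rpow_one,
          neg_div]

section Localized

variable {n : ℕ} {p : ℝ} {a : ℤ} {P : Set (En n)} {w σ : En n → ℝ} {S : Set (Set (En n))}

lemma exists_mem_band (hp : 1 < p) (hσP : avgSet σ P < ∞)
    (hσQ : ∀ Q ∈ S, avgSet σ Q ≤ 2 * avgSet σ P)
    (hApQ : ∀ Q ∈ S, (2 : ℝ≥0∞) ^ a < avgSet w Q * avgSet σ Q ^ (p - 1))
    {Q : Set (En n)} (hQ : Q ∈ S) : ∃ j, Q ∈ band S σ (avgSet σ P) j := by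
  have hσQ0 : avgSet σ Q ≠ 0 := by
    intro h0
    have := hApQ Q hQ
    rw [h0, ENNReal.zero_rpow_of_pos (by linarith), mul_zero] at this
    exact ENNReal.not_lt_zero this
  obtain ⟨j, hj⟩ := exists_le_mul_two_pow_le hσQ0 hσP.ne (hσQ Q hQ)
  exact ⟨j, hQ, hj⟩

lemma avgSet_le_of_mem_band (hp : 1 < p) (hσP0 : 0 < avgSet σ P) (hσP : avgSet σ P < ∞)
    (hP : (2 : ℝ≥0∞) ^ a < avgSet w P * avgSet σ P ^ (p - 1))
    (hApQ : ∀ Q ∈ S, avgSet w Q * avgSet σ Q ^ (p - 1) ≤ (2 : ℝ≥0∞) ^ (a + 1))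
    {j : ℕ} {Q : Set (En n)} (hQ : Q ∈ band S σ (avgSet σ P) j) :
    avgSet w Q ≤ 2 * avgSet w P * ((2 : ℝ≥0∞) ^ j) ^ (p - 1) := by
  refine le_mul_rpow_of_mul_rpow_le (by linarith) hσP0.ne' hσP.ne ?_ hQ.2.1
  calc avgSet w Q * avgSet σ Q ^ (p - 1) ≤ 2 ^ (a + 1) := hApQ Q hQ.1
    _ = 2 * 2 ^ a := by rw [ENNReal.zpow_add two_ne_zero ofNat_ne_top, zpow_one, mul_comm]
    _ ≤ 2 * (avgSet w P * avgSet σ P ^ (p - 1)) := by gcongr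
    _ = 2 * avgSet w P * avgSet σ P ^ (p - 1) := (mul_assoc _ _ _).symm

lemma wInt_sUnion_generation_band_le (hp : 1 < p) (hPD : P ∈ stdDyadic n)
    (hσP0 : 0 < avgSet σ P) (hσP : avgSet σ P < ∞)
    (hP : (2 : ℝ≥0∞) ^ a < avgSet w P * avgSet σ P ^ (p - 1))
    (hS : IsSparseFam S) (hSP : ∀ Q ∈ S, Q ⊆ P)
    (hApQ : ∀ Q ∈ S, avgSet w Q * avgSet σ Q ^ (p - 1) ≤ (2 : ℝ≥0∞) ^ (a + 1)) (j g : ℕ) :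
    wInt w (⋃₀ generation (band S σ (avgSet σ P) j) g) ≤
      2 * ((2 : ℝ≥0∞) ^ j) ^ (p - 1) * 2⁻¹ ^ g * wInt w P := by
  calc wInt w (⋃₀ generation (band S σ (avgSet σ P) j) g)
      ≤ 2 * avgSet w P * ((2 : ℝ≥0∞) ^ j) ^ (p - 1) * (2⁻¹ ^ g * volume P) :=
        (hS.mono fun _ h => h.1).wInt_sUnion_generation_le (volume_ne_top_of_mem_stdDyadic hPD)
          (fun Q hQ => hSP Q hQ.1) (fun _ hQ => avgSet_le_of_mem_band hp hσP0 hσP hP hApQ hQ) g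
    _ = 2 * ((2 : ℝ≥0∞) ^ j) ^ (p - 1) * 2⁻¹ ^ g * (volume P * avgSet w P) := by ring
    _ = 2 * ((2 : ℝ≥0∞) ^ j) ^ (p - 1) * 2⁻¹ ^ g * wInt w P := by
        rw [← wInt_eq_volume_mul_avgSet w (volume_pos_of_mem_stdDyadic hPD).ne'
          (volume_ne_top_of_mem_stdDyadic hPD)]

lemma setOf_lt_sparseOpNN_subset (hp : 1 < p) (hPD : P ∈ stdDyadic n) (hσP : avgSet σ P < ∞)
    (hS : IsSparseFam S) (hSP : ∀ Q ∈ S, Q ⊆ P) (hσQ : ∀ Q ∈ S, avgSet σ Q ≤ 2 * avgSet σ P)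
    (hApQ : ∀ Q ∈ S, (2 : ℝ≥0∞) ^ a < avgSet w Q * avgSet σ Q ^ (p - 1)) {t : ℝ} (ht : 0 ≤ t) :
    {x | x ∈ P ∧ ENNReal.ofReal t * avgSet σ P < sparseOpNN S σ x} ⊆
      ⋃ j, ⋃₀ generation (band S σ (avgSet σ P) j) (bandDepth t j) := by
  rintro x ⟨-, hx⟩
  by_contra hmem
  simp only [mem_iUnion, not_exists] at hmem
  set V := avgSet σ P
  have hcount (j : ℕ) : {Q | Q ∈ band S σ V j ∧ x ∈ Q}.encard ≤ bandDepth t j := by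
    refine ENat.lt_natCast_add_one_iff.1 (lt_of_not_ge fun hle => hmem j ?_)
    exact (hS.mono fun _ h => h.1).mem_sUnion_generation_of_le_encard
      (volume_ne_top_of_mem_stdDyadic hPD) (fun Q hQ => hSP Q hQ.1) hle
  have hc (j : ℕ) (Q : Set (En n)) (hQ : Q ∈ band S σ V j) : avgSet σ Q ≤ 2 * 2⁻¹ ^ j * V :=
    calc avgSet σ Q = avgSet σ Q * 2 ^ j * 2⁻¹ ^ j := by
          rw [mul_assoc, ← mul_pow, ENNReal.mul_inv_cancel two_ne_zero ofNat_ne_top, one_pow,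
            mul_one]
      _ ≤ 2 * V * 2⁻¹ ^ j := by gcongr ?_ * _; exact hQ.2.2
      _ = 2 * 2⁻¹ ^ j * V := by ring
  refine hx.not_ge ?_
  calc sparseOpNN S σ x
      ≤ ∑' j, {Q | Q ∈ band S σ V j ∧ x ∈ Q}.encard * (2 * 2⁻¹ ^ j * V) :=
        sparseOpNN_le_tsum_encard_mul x _ _ (fun _ hQ => exists_mem_band hp hσP hσQ hApQ hQ) hc
    _ ≤ ∑' j, (bandDepth t j : ℝ≥0∞) * (2 * 2⁻¹ ^ j) * V := by
        refine ENNReal.tsum_le_tsum fun j => ?_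
        rw [← mul_assoc]
        gcongr
        exact_mod_cast hcount j
    _ = (∑' j, (bandDepth t j : ℝ≥0∞) * (2 * 2⁻¹ ^ j)) * V := ENNReal.tsum_mul_right
    _ ≤ ENNReal.ofReal t * V := by
        gcongr
        exact tsum_bandDepth_mul_le ht

lemma wInt_setOf_lt_sparseOpNN_le (hp : 1 < p) (hPD : P ∈ stdDyadic n)
    (hσP0 : 0 < avgSet σ P) (hσP : avgSet σ P < ∞)
    (hP : (2 : ℝ≥0∞) ^ a < avgSet w P * avgSet σ P ^ (p - 1))
    (hS : IsSparseFam S) (hSP : ∀ Q ∈ S, Q ⊆ P) (hσQ : ∀ Q ∈ S, avgSet σ Q ≤ 2 * avgSet σ P)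
    (hApQ : ∀ Q ∈ S, (2 : ℝ≥0∞) ^ a < avgSet w Q * avgSet σ Q ^ (p - 1) ∧
      avgSet w Q * avgSet σ Q ^ (p - 1) ≤ (2 : ℝ≥0∞) ^ (a + 1))
    {t : ℝ} (ht : 32 * (p + 2) ≤ t) :
    wInt w {x | x ∈ P ∧ ENNReal.ofReal t * avgSet σ P < sparseOpNN S σ x} ≤
      2 ^ (1 - t / 32) * wInt w P :=
  calc wInt w {x | x ∈ P ∧ ENNReal.ofReal t * avgSet σ P < sparseOpNN S σ x}
      ≤ ∑' j, wInt w (⋃₀ generation (band S σ (avgSet σ P) j) (bandDepth t j)) :=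
        (lintegral_mono_set (setOf_lt_sparseOpNN_subset hp hPD hσP hS hSP hσQ
          (fun Q hQ => (hApQ Q hQ).1) (by linarith))).trans (lintegral_iUnion_le _ _)
    _ ≤ ∑' j, 2 * ((2 : ℝ≥0∞) ^ j) ^ (p - 1) * 2⁻¹ ^ bandDepth t j * wInt w P :=
        ENNReal.tsum_le_tsum fun j => wInt_sUnion_generation_band_le hp hPD hσP0 hσP hP hS hSP
          (fun Q hQ => (hApQ Q hQ).2) j _
    _ = (∑' j, 2 * ((2 : ℝ≥0∞) ^ j) ^ (p - 1) * 2⁻¹ ^ bandDepth t j) * wInt w P :=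
        ENNReal.tsum_mul_right
    _ ≤ 2 ^ (1 - t / 32) * wInt w P := by
        gcongr
        exact tsum_mul_inv_two_pow_bandDepth_le (by linarith) ht

end Localized

/-- exponential decay for localized sparse operators: if every cube of
the sparse family `S` lies in `P`, has `σ`-average at most `2 ⨍_P σ` and has joint
`A_p` product in `(2^a, 2^{a+1}]`, then
`w{x ∈ P : T^S σ(x) > t ⨍_P σ} ≤ C e^{-ct} w(P)`, with `c, C` depending only on `n, p`. -/
theorem stmt8 (n : ℕ) (p : ℝ) (hp : 1 < p) :
    ∃ c C : ℝ, 0 < c ∧ 0 < C ∧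
      ∀ (a : ℤ) (P : Set (En n)), P ∈ stdDyadic n →
      ∀ w σ : En n → ℝ, IsWeightE w → IsWeightE σ →
        0 < avgSet σ P → avgSet σ P < ⊤ →
        (2 : ℝ≥0∞) ^ a < avgSet w P * avgSet σ P ^ (p - 1) →
        avgSet w P * avgSet σ P ^ (p - 1) ≤ (2 : ℝ≥0∞) ^ (a + 1) →
      ∀ S : Set (Set (En n)), IsSparseFam S →
        (∀ Q ∈ S, Q ⊆ P) →
        (∀ Q ∈ S, avgSet σ Q ≤ 2 * avgSet σ P) →
        (∀ Q ∈ S, (2 : ℝ≥0∞) ^ a < avgSet w Q * avgSet σ Q ^ (p - 1) ∧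
          avgSet w Q * avgSet σ Q ^ (p - 1) ≤ (2 : ℝ≥0∞) ^ (a + 1)) →
      ∀ t : ℝ, 0 < t →
        wInt w {x | x ∈ P ∧ ENNReal.ofReal t * avgSet σ P < sparseOpNN S σ x} ≤
          ENNReal.ofReal (C * Real.exp (-c * t)) * wInt w P := by
  refine ⟨Real.log 2 / 32, 2 ^ (p + 3), by positivity, by positivity, ?_⟩
  intro a P hPD w σ _ _ hσP0 hσP hP _ S hS hSP hσQ hApQ t ht
  have hconst : ENNReal.ofReal (2 ^ (p + 3) * Real.exp (-(Real.log 2 / 32) * t)) =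
      2 ^ (p + 3 - t / 32) := by
    rw [← ENNReal.ofReal_ofNat 2, ENNReal.ofReal_rpow_of_pos two_pos, sub_eq_add_neg,
      Real.rpow_add two_pos (p + 3), Real.rpow_def_of_pos two_pos (-(t / 32))]
    ring_nf
  rw [hconst]
  rcases lt_or_ge t (32 * (p + 2)) with hsmall | hlarge
  · calc wInt w {x | x ∈ P ∧ ENNReal.ofReal t * avgSet σ P < sparseOpNN S σ x}
        ≤ wInt w P := lintegral_mono_set fun x hx => hx.1
      _ ≤ 2 ^ (p + 3 - t / 32) * wInt w P :=
        le_mul_of_one_le_left' (ENNReal.one_le_rpow one_le_two (by linarith))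
  · calc wInt w {x | x ∈ P ∧ ENNReal.ofReal t * avgSet σ P < sparseOpNN S σ x}
        ≤ 2 ^ (1 - t / 32) * wInt w P :=
          wInt_setOf_lt_sparseOpNN_le hp hPD hσP0 hσP hP hS hSP hσQ hApQ hlarge
      _ ≤ 2 ^ (p + 3 - t / 32) * wInt w P := by
          gcongr
          · exact one_le_two
          · linarith
end
end

section
/- Let 1 < p < ∞ and r > 1, set p' = p/(p−1), Φ(t) := t^{p'r}, Φ₀(t) := t^{p'(r+1)/2} and γ := 1/(2(r+1)). Then for every cube Q in ℝⁿ of finite positive measure and every nonnegative measurable function f on Q: ‖f‖_{Φ₀,Q} ≤ ‖f‖_{Φ,Q}^{1−γ} · ((⨍_Q f^{p'})^{1/p'})^{γ}. In particular, for a weight σ this follows from the averaging inequality ⨍_Q σ^{(r+1)/2} ≤ (⨍_Q σ^r)^{(2r+1)/(4r)}·(⨍_Q σ)^{1/4}. -/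
noncomputable section
open MeasureTheory ENNReal Set Metric

/-- A Young function: continuous, convex and increasing on `[0,∞)`, with `Φ(0) = 0`
and `Φ(t)/t → ∞` as `t → ∞`. -/
def IsYoung (Φ : ℝ → ℝ) : Prop :=
  ContinuousOn Φ (Set.Ici 0) ∧ ConvexOn ℝ (Set.Ici 0) Φ ∧ MonotoneOn Φ (Set.Ici 0) ∧
    Φ 0 = 0 ∧ Filter.Tendsto (fun t => Φ t / t) Filter.atTop Filter.atTop

/-- The complementary (conjugate) Young function: `φ̄(t) = sup_{s > 0} (s*t - φ(s))`. -/
def conjYoung (Φ : ℝ → ℝ) (t : ℝ) : ℝ :=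
  sSup {u : ℝ | ∃ s : ℝ, 0 < s ∧ u = s * t - Φ s}

/-- `[φ]_{B_q} = ∫_{1/2}^∞ φ(t) t^{-q-1} dt`, as an extended nonnegative real. -/
def bpConst (q : ℝ) (Φ : ℝ → ℝ) : ℝ≥0∞ :=
  ∫⁻ t in Set.Ioi ((1 : ℝ) / 2), ENNReal.ofReal (Φ t / t ^ (q + 1))

/-- The Luxemburg norm `‖f‖_{Φ,Q} = inf {λ > 0 : ⨍_Q Φ(|f|/λ) ≤ 1}` (with value `∞`
if no such `λ` exists). -/
def luxNormE {n : ℕ} (Φ : ℝ → ℝ) (Q : Set (En n)) (f : En n → ℝ) : ℝ≥0∞ :=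
  ⨅ (lam : ℝ) (_ : 0 < lam)
    (_ : (volume Q)⁻¹ * ∫⁻ y in Q, ENNReal.ofReal (Φ (|f y| / lam)) ≤ 1),
    ENNReal.ofReal lam

/-- The bump constant `[w,σ]_{Φ,p} = sup_B (⨍_B w)^{1/p} ‖σ^{1/p'}‖_{Φ,B}` over balls. -/
def bumpBallE {n : ℕ} (p : ℝ) (Φ : ℝ → ℝ) (w σ : En n → ℝ) : ℝ≥0∞ :=
  ⨆ (c : En n) (r : ℝ) (_ : 0 < r),
    avgSet w (ball c r) ^ (1 / p) *
      luxNormE Φ (ball c r) (fun y => σ y ^ (1 / (p / (p - 1))))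

/-- The bump constant `[σ,w]_{Ψ,p} = sup_B ‖w^{1/p}‖_{Ψ,B} (⨍_B σ)^{1/p'}` over balls. -/
def bumpBallR {n : ℕ} (p : ℝ) (Ψ : ℝ → ℝ) (σ w : En n → ℝ) : ℝ≥0∞ :=
  ⨆ (c : En n) (r : ℝ) (_ : 0 < r),
    luxNormE Ψ (ball c r) (fun y => w y ^ (1 / p)) *
      avgSet σ (ball c r) ^ (1 / (p / (p - 1)))

/-- The dyadic bump constant `[w,σ]_{Φ,p}^𝒟 = sup_{Q ∈ 𝒟} (⨍_Q w)^{1/p} ‖σ^{1/p'}‖_{Φ,Q}`. -/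
def bumpDyadicE {n : ℕ} (p : ℝ) (Φ : ℝ → ℝ) (w σ : En n → ℝ) : ℝ≥0∞ :=
  ⨆ (Q : Set (En n)) (_ : Q ∈ stdDyadic n),
    avgSet w Q ^ (1 / p) * luxNormE Φ Q (fun y => σ y ^ (1 / (p / (p - 1))))

/-- The dyadic bump constant `[σ,w]_{Ψ,p}^𝒟 = sup_{Q ∈ 𝒟} ‖w^{1/p}‖_{Ψ,Q} (⨍_Q σ)^{1/p'}`. -/
def bumpDyadicR {n : ℕ} (p : ℝ) (Ψ : ℝ → ℝ) (σ w : En n → ℝ) : ℝ≥0∞ :=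
  ⨆ (Q : Set (En n)) (_ : Q ∈ stdDyadic n),
    luxNormE Ψ Q (fun y => w y ^ (1 / p)) * avgSet σ Q ^ (1 / (p / (p - 1)))

/-- An axis-parallel cube in `ℝⁿ` (half-open). -/
def IsCubeE {n : ℕ} (Q : Set (En n)) : Prop :=
  ∃ (a : En n) (h : ℝ), 0 < h ∧ Q = {x | ∀ i, a i ≤ x i ∧ x i < a i + h}

/-! For a power Young function the Luxemburg norm is a normalized `L^q` norm, so both claims are
statements about the moments of `h = f^{p'}` (resp. `h = σ`) under the normalized measure on `Q`.
Cauchy–Schwarz gives `⨍ h^{(r+1)/2} ≤ (⨍ h^r)^{1/2} (⨍ h)^{1/2}` and Jensen gives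
`⨍ h ≤ (⨍ h^r)^{1/r}`; applying Jensen to one of the two factors of
`(⨍ h)^{1/2} = (⨍ h)^{1/4} (⨍ h)^{1/4}` yields the averaging inequality, and its
`2/(p'(r+1))`-th power is the norm inequality. -/

open ProbabilityTheory

theorem lintegral_cond {Ω : Type*} [MeasurableSpace Ω] (μ : Measure Ω) (s : Set Ω)
    (f : Ω → ℝ≥0∞) : ∫⁻ x, f x ∂μ[|s] = (μ s)⁻¹ * ∫⁻ x in s, f x ∂μ :=
  lintegral_smul_measure _ _

theorem volume_cube {n : ℕ} (a : En n) (h : ℝ) :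
    volume {x : En n | ∀ i, a i ≤ x i ∧ x i < a i + h} = ENNReal.ofReal h ^ n := by
  have hpre : {x : En n | ∀ i, a i ≤ x i ∧ x i < a i + h}
      = (MeasurableEquiv.toLp 2 (Fin n → ℝ)).symm ⁻¹' univ.pi fun i => Ico (a i) (a i + h) := by
    ext x; simp [Set.mem_pi]
  rw [hpre, (EuclideanSpace.volume_preserving_symm_measurableEquiv_toLp (Fin n)).measure_preimage
    (MeasurableSet.univ_pi fun i => measurableSet_Ico).nullMeasurableSet, volume_pi_pi]
  simp [Real.volume_Ico]

theorem IsCubeE.isProbabilityMeasure_cond {n : ℕ} {Q : Set (En n)} (hQ : IsCubeE Q) :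
    IsProbabilityMeasure (volume[|Q]) := by
  obtain ⟨a, h, hh, rfl⟩ := hQ
  refine cond_isProbabilityMeasure_of_finite ?_ ?_ <;> rw [volume_cube]
  · exact pow_ne_zero n (by simpa using hh)
  · exact ENNReal.pow_ne_top ENNReal.ofReal_ne_top

theorem iInf_ofReal_of_le (c : ℝ≥0∞) :
    ⨅ (lam : ℝ) (_ : 0 < lam) (_ : c ≤ ENNReal.ofReal lam), ENNReal.ofReal lam = c := by
  refine le_antisymm (le_of_forall_gt_imp_ge_of_dense fun d hcd => ?_)
    (le_iInf₂ fun _ _ => le_iInf id)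
  obtain ⟨lam, -, hc, hd⟩ := ENNReal.lt_iff_exists_real_btwn.mp hcd
  exact iInf₂_le_of_le lam (ENNReal.ofReal_pos.mp (pos_of_gt hc)) (iInf_le_of_le hc.le hd.le)

theorem luxNormE_rpow {n : ℕ} {q : ℝ} (hq : 0 < q) (Q : Set (En n)) {f : En n → ℝ}
    (hf : ∀ x, 0 ≤ f x) :
    luxNormE (fun t => t ^ q) Q f
      = ((volume Q)⁻¹ * ∫⁻ y in Q, ENNReal.ofReal (f y) ^ q) ^ (1 / q) := by
  set I := (volume Q)⁻¹ * ∫⁻ y in Q, ENNReal.ofReal (f y) ^ q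
  have hscale : ∀ lam : ℝ, 0 < lam →
      (volume Q)⁻¹ * ∫⁻ y in Q, ENNReal.ofReal ((|f y| / lam) ^ q)
        = I / ENNReal.ofReal lam ^ q := by
    intro lam hlam
    have hpt : ∀ y, ENNReal.ofReal ((|f y| / lam) ^ q)
        = ENNReal.ofReal (f y) ^ q * (ENNReal.ofReal lam ^ q)⁻¹ := fun y => by
      rw [abs_of_nonneg (hf y), ← ENNReal.ofReal_rpow_of_nonneg (div_nonneg (hf y) hlam.le) hq.le,
        ENNReal.ofReal_div_of_pos hlam, ENNReal.div_rpow_of_nonneg _ _ hq.le, div_eq_mul_inv]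
    rw [lintegral_congr hpt, lintegral_mul_const' _ _ (by simp [hlam, hq]), ← mul_assoc,
      div_eq_mul_inv]
  have hcond : ∀ lam : ℝ, 0 < lam →
      (I / ENNReal.ofReal lam ^ q ≤ 1 ↔ I ^ (1 / q) ≤ ENNReal.ofReal lam) := by
    intro lam hlam
    rw [ENNReal.div_le_iff (by simp [hlam, hq]) (by simp [hq.le]), one_mul, one_div,
      ENNReal.rpow_inv_le_iff hq]
  unfold luxNormE
  rw [← iInf_ofReal_of_le (I ^ (1 / q))]
  refine iInf_congr fun lam => iInf_congr_Prop Iff.rfl fun hlam => ?_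
  rw [hscale lam hlam, hcond lam hlam]

section Moments

variable {α : Type*} [MeasurableSpace α] {μ : Measure α} {h : α → ℝ≥0∞}

theorem lintegral_rpow_midpoint_le (hh : AEMeasurable h μ) {a b : ℝ} (ha : 0 ≤ a)
    (hb : 0 ≤ b) :
    ∫⁻ x, h x ^ ((a + b) / 2) ∂μ
      ≤ (∫⁻ x, h x ^ a ∂μ) ^ (1 / 2 : ℝ) * (∫⁻ x, h x ^ b ∂μ) ^ (1 / 2 : ℝ) := by
  have hsplit : ∀ x, h x ^ ((a + b) / 2) = h x ^ (a / 2) * h x ^ (b / 2) := fun x => by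
    rw [← ENNReal.rpow_add_of_nonneg _ _ (by positivity) (by positivity), add_div]
  have hsq : ∀ c : ℝ, ∀ x, (h x ^ (c / 2)) ^ (2 : ℝ) = h x ^ c := fun c x => by
    rw [← ENNReal.rpow_mul, div_mul_cancel₀ c two_ne_zero]
  rw [lintegral_congr hsplit]
  simpa only [Pi.mul_apply, hsq] using
    ENNReal.lintegral_mul_le_Lp_mul_Lq μ Real.HolderConjugate.two_two
      (hh.pow_const (a / 2)) (hh.pow_const (b / 2))

theorem lintegral_le_lintegral_rpow_rpow [IsProbabilityMeasure μ] (hh : AEMeasurable h μ)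
    {t : ℝ} (ht : 1 < t) : ∫⁻ x, h x ∂μ ≤ (∫⁻ x, h x ^ t ∂μ) ^ (1 / t) := by
  simpa using ENNReal.lintegral_mul_le_Lp_mul_Lq μ (Real.HolderConjugate.conjExponent ht) hh
    (aemeasurable_const (b := 1))

theorem lintegral_rpow_half_add_one_le [IsProbabilityMeasure μ] (hh : AEMeasurable h μ)
    {r : ℝ} (hr : 1 < r) :
    ∫⁻ x, h x ^ ((r + 1) / 2) ∂μ
      ≤ (∫⁻ x, h x ^ r ∂μ) ^ ((2 * r + 1) / (4 * r)) * (∫⁻ x, h x ∂μ) ^ ((1 : ℝ) / 4) := by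
  set A := ∫⁻ x, h x ^ r ∂μ
  set B := ∫⁻ x, h x ∂μ
  have hr0 : 0 < r := zero_lt_one.trans hr
  have hlogconv : ∫⁻ x, h x ^ ((r + 1) / 2) ∂μ ≤ A ^ (1 / 2 : ℝ) * B ^ (1 / 2 : ℝ) := by
    simpa only [ENNReal.rpow_one] using lintegral_rpow_midpoint_le hh hr0.le zero_le_one
  have hjensen : B ≤ A ^ (1 / r) := lintegral_le_lintegral_rpow_rpow hh hr
  calc ∫⁻ x, h x ^ ((r + 1) / 2) ∂μ ≤ A ^ (1 / 2 : ℝ) * (B ^ (1 / 4 : ℝ) * B ^ (1 / 4 : ℝ)) := by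
        rwa [← ENNReal.rpow_add_of_nonneg _ _ (by norm_num) (by norm_num),
          show (1 / 4 + 1 / 4 : ℝ) = 1 / 2 by norm_num]
    _ ≤ A ^ (1 / 2 : ℝ) * ((A ^ (1 / r)) ^ (1 / 4 : ℝ) * B ^ (1 / 4 : ℝ)) := by gcongr
    _ = A ^ ((2 * r + 1) / (4 * r)) * B ^ ((1 : ℝ) / 4) := by
        rw [← ENNReal.rpow_mul, ← mul_assoc,
          ← ENNReal.rpow_add_of_nonneg _ _ (by norm_num) (by positivity)]
        congr 2
        field_simp
        ring

end Moments

theorem rpow_interpolate_of_le {A B C : ℝ≥0∞} {s r : ℝ} (hs : 0 < s) (hr : 0 < r)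
    (h : C ≤ A ^ ((2 * r + 1) / (4 * r)) * B ^ ((1 : ℝ) / 4)) :
    C ^ (1 / (s * ((r + 1) / 2)))
      ≤ (A ^ (1 / (s * r))) ^ (1 - 1 / (2 * (r + 1))) * (B ^ (1 / s)) ^ (1 / (2 * (r + 1))) := by
  calc C ^ (1 / (s * ((r + 1) / 2)))
      ≤ (A ^ ((2 * r + 1) / (4 * r)) * B ^ ((1 : ℝ) / 4)) ^ (1 / (s * ((r + 1) / 2))) := by
        gcongr
    _ = _ := by
        rw [ENNReal.mul_rpow_of_nonneg _ _ (by positivity), ← ENNReal.rpow_mul,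
          ← ENNReal.rpow_mul, ← ENNReal.rpow_mul, ← ENNReal.rpow_mul]
        congr 2 <;> field_simp <;> ring

/-- for `Φ(t) = t^{p'r}`, `Φ₀(t) = t^{p'(r+1)/2}` and `γ = 1/(2(r+1))`,
the Luxemburg norms satisfy `‖f‖_{Φ₀,Q} ≤ ‖f‖_{Φ,Q}^{1-γ} ((⨍_Q f^{p'})^{1/p'})^γ` on
every cube, and for every weight `σ` one has the averaging inequality
`⨍_Q σ^{(r+1)/2} ≤ (⨍_Q σ^r)^{(2r+1)/(4r)} (⨍_Q σ)^{1/4}`. -/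
theorem stmt17 (n : ℕ) (p r : ℝ) (hp : 1 < p) (hr : 1 < r)
    (Q : Set (En n)) (hQ : IsCubeE Q) :
    (∀ f : En n → ℝ, (∀ x, 0 ≤ f x) → Measurable f →
      luxNormE (fun t => t ^ (p / (p - 1) * ((r + 1) / 2))) Q f ≤
        luxNormE (fun t => t ^ (p / (p - 1) * r)) Q f ^ (1 - 1 / (2 * (r + 1))) *
          (((volume Q)⁻¹ * ∫⁻ y in Q, ENNReal.ofReal (f y) ^ (p / (p - 1))) ^
              (1 / (p / (p - 1)))) ^ (1 / (2 * (r + 1)))) ∧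
    (∀ σ : En n → ℝ, IsWeightE σ →
      (volume Q)⁻¹ * ∫⁻ y in Q, ENNReal.ofReal (σ y) ^ ((r + 1) / 2) ≤
        ((volume Q)⁻¹ * ∫⁻ y in Q, ENNReal.ofReal (σ y) ^ r) ^ ((2 * r + 1) / (4 * r)) *
          ((volume Q)⁻¹ * ∫⁻ y in Q, ENNReal.ofReal (σ y)) ^ ((1 : ℝ) / 4)) := by
  have := hQ.isProbabilityMeasure_cond
  have hp' : 0 < p / (p - 1) := div_pos (by linarith) (by linarith)
  refine ⟨fun f hf hfm => ?_, fun σ hσ => ?_⟩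
  · rw [luxNormE_rpow (by positivity) Q hf, luxNormE_rpow (by positivity) Q hf]
    have hmoment := lintegral_rpow_half_add_one_le
      (hfm.ennreal_ofReal.pow_const (p / (p - 1))).aemeasurable hr (μ := volume[|Q])
    simp only [← ENNReal.rpow_mul, lintegral_cond] at hmoment
    exact rpow_interpolate_of_le hp' (by linarith) hmoment
  · simpa only [lintegral_cond] using
      lintegral_rpow_half_add_one_le hσ.2.1.ennreal_ofReal.aemeasurable hr (μ := volume[|Q])
end
end
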